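/- Let $h:\mathbb{R}^N\to(0,\infty)$ be smooth with $\kappa(h)=\kappa/h$ for a constant $\kappa>0$. Then the capillary tensor divergence $\mathrm{div}K=\nabla\big(h\kappa(h)\Delta h+\tfrac12(\kappa(h)+h\kappa'(h))|\nabla h|^2\big)-\mathrm{div}\big(\kappa(h)\nabla h\otimes\nabla h\big)$ satisfies, componentwise, $\mathrm{div}K = \kappa\, h\,\nabla\big(\Delta \ln h + \tfrac12 |\nabla \ln h|^2\big)$ wherever $h>0$. -/

import Mathlib

/-!
With `κ(h) = κ/h` the coefficient `κ(h) + h κ'(h)` vanishes, so the potential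
`h κ(h) Δh + ½(κ(h) + h κ'(h))|∇h|²` is just `κ Δh`. On the other side,
`Δ ln h + ½|∇ ln h|² = Δh/h − |∇h|²/(2h²)`. Expanding the remaining derivatives by the
product and quotient rules, and using the symmetry `∂ᵢ∂ⱼh = ∂ⱼ∂ᵢh` to recognise
`∑ⱼ ∂ⱼh ∂ᵢ∂ⱼh = ½ ∂ᵢ|∇h|²`, both sides become
`κ (∂ᵢΔh − (½ ∂ᵢ|∇h|² + ∂ᵢh Δh)/h + ∂ᵢh |∇h|²/h²)`.
-/

open MeasureTheory Real Set
open scoped ENNReal NNReal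

noncomputable section

abbrev Rn (N : ℕ) := EuclideanSpace ℝ (Fin N)

variable {N : ℕ}

/-- Partial derivative in the `i`-th coordinate direction. -/
def pd (i : Fin N) (f : Rn N → ℝ) : Rn N → ℝ :=
  fun x => fderiv ℝ f x (EuclideanSpace.single i 1)

def lap (f : Rn N → ℝ) : Rn N → ℝ := fun x => ∑ i, pd i (pd i f) x

def gradSq (f : Rn N → ℝ) : Rn N → ℝ := fun x => ∑ i, (pd i f x) ^ 2

section Calculus

variable {f g : Rn N → ℝ} {x : Rn N} {i : Fin N}

theorem pd_sub (hf : DifferentiableAt ℝ f x) (hg : DifferentiableAt ℝ g x) :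
    pd i (fun y => f y - g y) x = pd i f x - pd i g x := by
  simp [pd, fderiv_fun_sub hf hg]

theorem pd_mul (hf : DifferentiableAt ℝ f x) (hg : DifferentiableAt ℝ g x) :
    pd i (fun y => f y * g y) x = pd i f x * g x + f x * pd i g x := by
  simp only [pd, fderiv_fun_mul hf hg, add_apply, smul_apply, smul_eq_mul]
  ring

theorem pd_const_mul (hf : DifferentiableAt ℝ f x) (c : ℝ) :
    pd i (fun y => c * f y) x = c * pd i f x := by
  simp [pd, fderiv_const_mul hf]

theorem pd_sq (hf : DifferentiableAt ℝ f x) :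
    pd i (fun y => f y ^ 2) x = 2 * f x * pd i f x := by
  simp [pd, fderiv_fun_pow 2 hf]

theorem pd_inv (hg : DifferentiableAt ℝ g x) (hgx : g x ≠ 0) :
    pd i (fun y => (g y)⁻¹) x = -pd i g x / g x ^ 2 := by
  change fderiv ℝ ((fun t : ℝ => t⁻¹) ∘ g) x _ = _
  simp [pd, fderiv_comp x (differentiableAt_inv hgx) hg, fderiv_inv, div_eq_mul_inv]

theorem pd_div (hf : DifferentiableAt ℝ f x) (hg : DifferentiableAt ℝ g x) (hgx : g x ≠ 0) :
    pd i (fun y => f y / g y) x = (pd i f x * g x - f x * pd i g x) / g x ^ 2 := by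
  conv_lhs => simp only [div_eq_mul_inv]
  rw [pd_mul hf (hg.fun_inv hgx), pd_inv hg hgx]
  field_simp
  ring

theorem pd_log (hf : DifferentiableAt ℝ f x) (hfx : f x ≠ 0) :
    pd i (fun y => Real.log (f y)) x = pd i f x / f x := by
  simp [pd, (hf.hasFDerivAt.log hfx).fderiv, div_eq_inv_mul]

theorem pd_sum {ι : Type*} {s : Finset ι} {F : ι → Rn N → ℝ}
    (hF : ∀ j ∈ s, DifferentiableAt ℝ (F j) x) :
    pd i (fun y => ∑ j ∈ s, F j y) x = ∑ j ∈ s, pd i (F j) x := by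
  simp [pd, fderiv_fun_sum hF]

theorem contDiff_pd {n : WithTop ℕ∞} (hf : ContDiff ℝ (n + 1) f) (i : Fin N) :
    ContDiff ℝ n (pd i f) :=
  (contDiff_succ_iff_fderiv.mp hf).2.2.clm_apply contDiff_const

theorem pd_comm (hf : ContDiff ℝ 2 f) (i j : Fin N) (x : Rn N) :
    pd i (pd j f) x = pd j (pd i f) x := by
  have hdf : Differentiable ℝ (fderiv ℝ f) :=
    (hf.fderiv_right (m := 1) le_rfl).differentiable one_ne_zero
  have hsnd : ∀ k l : Fin N, pd k (pd l f) x =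
      fderiv ℝ (fderiv ℝ f) x (EuclideanSpace.single k 1) (EuclideanSpace.single l 1) := by
    intro k l
    change fderiv ℝ ((ContinuousLinearMap.apply ℝ ℝ (EuclideanSpace.single l 1)) ∘ fderiv ℝ f) x
      (EuclideanSpace.single k 1) = _
    simp [fderiv_comp x (ContinuousLinearMap.apply ℝ ℝ _).differentiableAt (hdf x)]
  rw [hsnd, hsnd]
  exact hf.contDiffAt.isSymmSndFDerivAt (by simp) _ _

end Calculus

section Operators

variable {f : Rn N → ℝ}

theorem contDiff_lap {n : WithTop ℕ∞} (hf : ContDiff ℝ (n + 2) f) : ContDiff ℝ n (lap f) :=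
  ContDiff.sum fun i _ =>
    contDiff_pd (contDiff_pd (n := n + 1) (by rwa [add_assoc, one_add_one_eq_two]) i) i

theorem contDiff_gradSq {n : WithTop ℕ∞} (hf : ContDiff ℝ (n + 1) f) :
    ContDiff ℝ n (gradSq f) :=
  ContDiff.sum fun i _ => (contDiff_pd hf i).pow 2

theorem pd_gradSq (hf : ContDiff ℝ 2 f) (i : Fin N) (x : Rn N) :
    pd i (gradSq f) x = 2 * ∑ j, pd j f x * pd i (pd j f) x := by
  have hd j : Differentiable ℝ (pd j f) := (contDiff_pd hf j).differentiable one_ne_zero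
  unfold gradSq
  rw [pd_sum fun j _ => (hd j x).fun_pow 2, Finset.mul_sum]
  refine Finset.sum_congr rfl fun j _ => ?_
  rw [pd_sq (hd j x), mul_assoc]

theorem sum_pd_const_div_mul_pd_mul_pd (hf : ContDiff ℝ 2 f) (hf0 : ∀ y, f y ≠ 0) (c : ℝ)
    (i : Fin N) (x : Rn N) :
    ∑ j, pd j (fun y => c / f y * pd i f y * pd j f y) x
      = c * ((pd i (gradSq f) x / 2 + pd i f x * lap f x) / f x
        - pd i f x * gradSq f x / f x ^ 2) := by
  have hf1 : ContDiff ℝ 1 f := hf.of_le one_le_two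
  have hd j : ContDiff ℝ 1 (pd j f) := contDiff_pd hf j
  have hterm j : pd j (fun y => c / f y * pd i f y * pd j f y) x
      = c * (((pd i (pd j f) x * pd j f x + pd i f x * pd j (pd j f) x) * f x
        - pd i f x * pd j f x * pd j f x) / f x ^ 2) := by
    have hprod : ContDiff ℝ 1 fun y => pd i f y * pd j f y := (hd i).mul (hd j)
    have hquot : Differentiable ℝ fun y => pd i f y * pd j f y / f y :=
      (hprod.div hf1 hf0).differentiable one_ne_zero
    have hfun : (fun y => c / f y * pd i f y * pd j f y)
        = fun y => c * (pd i f y * pd j f y / f y) := by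
      funext y
      ring
    rw [hfun, pd_const_mul (hquot x),
      pd_div ((hprod.differentiable one_ne_zero) x) ((hf1.differentiable one_ne_zero) x) (hf0 x),
      pd_mul ((hd i).differentiable one_ne_zero x) ((hd j).differentiable one_ne_zero x),
      pd_comm hf j i]
  simp only [hterm, ← Finset.mul_sum]
  congr 1
  simp only [pd_gradSq hf, lap, gradSq, Finset.mul_sum, Finset.sum_div,
    ← Finset.sum_add_distrib, ← Finset.sum_sub_distrib]
  refine Finset.sum_congr rfl fun j _ => ?_
  field_simp

theorem gradSq_log (hf : Differentiable ℝ f) (hf0 : ∀ y, f y ≠ 0) (x : Rn N) :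
    gradSq (fun z => Real.log (f z)) x = gradSq f x / f x ^ 2 := by
  simp only [gradSq, pd_log (hf x) (hf0 x), div_pow, Finset.sum_div]

theorem lap_log (hf : ContDiff ℝ 2 f) (hf0 : ∀ y, f y ≠ 0) (x : Rn N) :
    lap (fun z => Real.log (f z)) x = lap f x / f x - gradSq f x / f x ^ 2 := by
  have hd j : Differentiable ℝ (pd j f) := (contDiff_pd hf j).differentiable one_ne_zero
  have hd0 : Differentiable ℝ f := hf.differentiable two_ne_zero
  have hlog j : pd j (fun z => Real.log (f z)) = fun y => pd j f y / f y :=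
    funext fun y => pd_log (hd0 y) (hf0 y)
  simp only [lap, gradSq, hlog, pd_div (hd _ x) (hd0 x) (hf0 x), Finset.sum_div,
    ← Finset.sum_sub_distrib]
  refine Finset.sum_congr rfl fun j _ => ?_
  field_simp

theorem lap_log_add_half_gradSq_log (hf : ContDiff ℝ 2 f) (hf0 : ∀ y, f y ≠ 0) :
    (fun y => lap (fun z => Real.log (f z)) y + (1/2) * gradSq (fun z => Real.log (f z)) y)
      = fun y => lap f y / f y - gradSq f y / (2 * f y ^ 2) := by
  funext y
  rw [lap_log hf hf0, gradSq_log (hf.differentiable two_ne_zero) hf0]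
  ring

theorem pd_lap_log_add_half_gradSq_log (hf : ContDiff ℝ 3 f) (hf0 : ∀ y, f y ≠ 0)
    (i : Fin N) (x : Rn N) :
    f x * pd i (fun y => lap (fun z => Real.log (f z)) y
        + (1/2) * gradSq (fun z => Real.log (f z)) y) x
      = pd i (lap f) x - (pd i (gradSq f) x / 2 + pd i f x * lap f x) / f x
        + pd i f x * gradSq f x / f x ^ 2 := by
  have hf2 : ContDiff ℝ 2 f := hf.of_le (by norm_num)
  have hf1 : ContDiff ℝ 1 f := hf.of_le (by norm_num)
  have hlap : ContDiff ℝ 1 (lap f) := contDiff_lap hf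
  have hgrad : ContDiff ℝ 1 (gradSq f) := contDiff_gradSq hf2
  have hden : ContDiff ℝ 1 fun y => 2 * f y ^ 2 := contDiff_const.mul (hf1.pow 2)
  have hden0 y : 2 * f y ^ 2 ≠ 0 := by simp [hf0 y]
  have hq1 : Differentiable ℝ fun y => lap f y / f y :=
    (hlap.div hf1 hf0).differentiable one_ne_zero
  have hq2 : Differentiable ℝ fun y => gradSq f y / (2 * f y ^ 2) :=
    (hgrad.div hden hden0).differentiable one_ne_zero
  have hd1 : Differentiable ℝ f := hf1.differentiable one_ne_zero
  rw [lap_log_add_half_gradSq_log hf2 hf0, pd_sub (hq1 x) (hq2 x),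
    pd_div (hlap.differentiable one_ne_zero x) (hd1 x) (hf0 x),
    pd_div (hgrad.differentiable one_ne_zero x) (hden.differentiable one_ne_zero x) (hden0 x),
    pd_const_mul ((hd1 x).fun_pow 2), pd_sq (hd1 x)]
  field_simp [hf0 x]
  ring

end Operators

theorem capillary_potential_const_div {f : Rn N → ℝ} (hf0 : ∀ y, f y ≠ 0) (c : ℝ) :
    (fun y => f y * (c / f y) * lap f y
        + (1/2) * ((c / f y) + f y * (-(c / (f y) ^ 2))) * gradSq f y)
      = fun y => c * lap f y := by
  funext y
  field_simp [hf0 y]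
  ring

theorem stmt1_general {N : ℕ} (h : Rn N → ℝ) (κ : ℝ)
    (hsm : ContDiff ℝ (⊤ : ℕ∞) h) (hpos : ∀ x, 0 < h x) :
    ∀ (i : Fin N) (x : Rn N),
      pd i (fun y => h y * (κ / h y) * lap h y
          + (1/2) * ((κ / h y) + h y * (-(κ / (h y) ^ 2))) * gradSq h y) x
        - ∑ j, pd j (fun y => (κ / h y) * pd i h y * pd j h y) x
      = κ * h x *
          pd i (fun y => lap (fun z => Real.log (h z)) y
            + (1/2) * gradSq (fun z => Real.log (h z)) y) x := by
  intro i x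
  have hne y : h y ≠ 0 := (hpos y).ne'
  have h3 : ContDiff ℝ 3 h := hsm.of_le (by norm_cast)
  have hlap : Differentiable ℝ (lap h) := (contDiff_lap h3).differentiable one_ne_zero
  rw [capillary_potential_const_div hne, pd_const_mul (hlap x),
    sum_pd_const_div_mul_pd_mul_pd (h3.of_le (by norm_num)) hne, mul_assoc,
    pd_lap_log_add_half_gradSq_log h3 hne]
  ring

/-- for `κ(h) = κ/h` (so `κ'(h) = -κ/h²`), the capillary tensor divergence
`div K = ∇(hκ(h)Δh + ½(κ(h)+hκ'(h))|∇h|²) − div(κ(h)∇h⊗∇h)` equals, componentwise,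
`κ h ∇(Δ ln h + ½|∇ ln h|²)`. -/
theorem stmt1 {N : ℕ} (h : Rn N → ℝ) (κ : ℝ) (hκ : 0 < κ)
    (hsm : ContDiff ℝ (⊤ : ℕ∞) h) (hpos : ∀ x, 0 < h x) :
    ∀ (i : Fin N) (x : Rn N),
      pd i (fun y => h y * (κ / h y) * lap h y
          + (1/2) * ((κ / h y) + h y * (-(κ / (h y) ^ 2))) * gradSq h y) x
        - ∑ j, pd j (fun y => (κ / h y) * pd i h y * pd j h y) x
      = κ * h x *
          pd i (fun y => lap (fun z => Real.log (h z)) y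
            + (1/2) * gradSq (fun z => Real.log (h z)) y) x :=
  stmt1_general h κ hsm hpos
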